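/- arXiv:2407.09961 — 4 statements merged into one kernel-verified Lean document; each statement's English description precedes it below -/
import Mathlib

section
/- For every t > 0, the event {ζ_t = Z} coincides with the event {τ ≤ t} up to a P-null set: P(({ζ_t = Z} \ {τ ≤ t}) ∪ ({τ ≤ t} \ {ζ_t = Z})) = 0; equivalently, P(ζ_t = Z, t < τ) + P(ζ_t ≠ Z, τ ≤ t) = 0. -/
open MeasureTheory ProbabilityTheory Real Set

noncomputable section

namespace LevyBridge

variable {Ω : Type*} [MeasurableSpace Ω]

/-- The Gaussian (heat-kernel) density with variance `s`. -/
def gaussDensity (s x : ℝ) : ℝ :=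
  (Real.sqrt (2 * Real.pi * s))⁻¹ * Real.exp (-x ^ 2 / (2 * s))

/-- `B` is a standard Brownian motion under `P`: it starts at `0`, has a.s. continuous
paths, independent increments, and Gaussian increments `B t - B s ∼ N(0, t - s)`. -/
def IsBrownianMotion (P : Measure Ω) (B : ℝ → Ω → ℝ) : Prop :=
  (∀ᵐ ω ∂P, B 0 ω = 0) ∧
  (∀ᵐ ω ∂P, Continuous fun t => B t ω) ∧
  (∀ (n : ℕ) (t : Fin (n + 1) → ℝ), Monotone t →
    iIndepFun
      (fun i : Fin n => fun ω => B (t i.succ) ω - B (t i.castSucc) ω) P) ∧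
  (∀ s t : ℝ, 0 ≤ s → s ≤ t →
    Measure.map (fun ω => B t ω - B s ω) P = gaussianReal 0 (Real.toNNReal (t - s)))

/-- Mutual independence of the Brownian motion `B`, the random time `τ` and the
pinning point `Z`:  `B ⫫ (τ, Z)` and `τ ⫫ Z`. -/
def MutuallyIndep (P : Measure Ω) (B : ℝ → Ω → ℝ) (τ Z : Ω → ℝ) : Prop :=
  IndepFun (fun ω t => B t ω) (fun ω => (τ ω, Z ω)) P ∧ IndepFun τ Z P

/-- The Brownian bridge with random length `τ` and random pinning point `Z`:
`ζ_t = B_{t∧τ} − ((t∧τ)/τ) B_τ + ((t∧τ)/τ) Z`. -/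
def bridge (B : ℝ → Ω → ℝ) (τ Z : Ω → ℝ) (t : ℝ) (ω : Ω) : ℝ :=
  B (min t (τ ω)) ω - (min t (τ ω) / τ ω) * B (τ ω) ω + (min t (τ ω) / τ ω) * Z ω

/- ## Auxiliary material -/

open Filter ENNReal

/-- Evaluation at a countably-valued measurable time is measurable. -/
lemma measurable_eval_countable {α : Type*} [MeasurableSpace α] {F : ℝ → α → ℝ}
    (hF : ∀ s, Measurable (F s)) {g : α → ℝ} (hg : Measurable g)
    (hc : (Set.range g).Countable) : Measurable fun a => F (g a) a := by
  intro U hU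
  have h : (fun a => F (g a) a) ⁻¹' U = ⋃ q ∈ Set.range g, ({a | g a = q} ∩ F q ⁻¹' U) := by
    ext a
    simp only [Set.mem_preimage, Set.mem_iUnion, Set.mem_inter_iff, Set.mem_setOf_eq]
    constructor
    · intro h; exact ⟨g a, ⟨a, rfl⟩, rfl, h⟩
    · rintro ⟨q, _, hq, h⟩; rwa [hq]
  rw [h]
  exact MeasurableSet.biUnion hc fun q _ =>
    (hg (measurableSet_singleton q)).inter (hF q hU)

/-- Dyadic upper approximation of a real number. -/
def dy (n : ℕ) (s : ℝ) : ℝ := (⌈s * 2 ^ n⌉ : ℝ) / 2 ^ n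

lemma le_dy (n : ℕ) (s : ℝ) : s ≤ dy n s := by
  rw [dy, le_div_iff₀ (by positivity)]
  exact Int.le_ceil _

lemma dy_le (n : ℕ) (s : ℝ) : dy n s ≤ s + (2 ^ n)⁻¹ := by
  rw [dy, div_le_iff₀ (by positivity)]
  calc (⌈s * 2 ^ n⌉ : ℝ) ≤ s * 2 ^ n + 1 := (Int.ceil_lt_add_one (s * 2 ^ n)).le
    _ = (s + (2 ^ n)⁻¹) * 2 ^ n := by field_simp

lemma measurable_dy (n : ℕ) : Measurable (dy n) :=
  ((measurable_from_top.comp ((measurable_id.mul_const _).ceil)).div_const _ :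
    Measurable fun s : ℝ => ((⌈s * 2 ^ n⌉ : ℤ) : ℝ) / 2 ^ n)

lemma countable_range_dy (n : ℕ) : (Set.range (dy n)).Countable := by
  have : Set.range (dy n) ⊆ Set.range (fun k : ℤ => (k : ℝ) / 2 ^ n) := by
    rintro x ⟨s, rfl⟩; exact ⟨⌈s * 2 ^ n⌉, rfl⟩
  exact (Set.countable_range _).mono this

lemma tendsto_dy (s : ℝ) : Tendsto (fun n => dy n s) atTop (nhds s) := by
  have h1 : Tendsto (fun n : ℕ => s + ((2 : ℝ) ^ n)⁻¹) atTop (nhds (s + 0)) :=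
    tendsto_const_nhds.add
      (tendsto_inv_atTop_zero.comp (tendsto_pow_atTop_atTop_of_one_lt (by norm_num)))
  rw [add_zero] at h1
  exact tendsto_of_tendsto_of_tendsto_of_le_of_le tendsto_const_nhds h1 (le_dy · s) (dy_le · s)

/-- Gaussian measures of intervals are controlled by the sup of the density. -/
lemma gauss_Icc_le {t : ℝ} (ht : 0 < t) (a ε : ℝ) :
    gaussianReal 0 t.toNNReal {v | |v - a| ≤ ε} ≤
      ENNReal.ofReal ((Real.sqrt (2 * π * t))⁻¹) * ENNReal.ofReal (2 * ε) := by
  have hv : t.toNNReal ≠ 0 := (Real.toNNReal_pos.mpr ht).ne'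
  have hset : {v : ℝ | |v - a| ≤ ε} = Set.Icc (a - ε) (a + ε) := by
    ext v
    simp only [Set.mem_setOf_eq, Set.mem_Icc, abs_le]
    constructor <;> rintro ⟨h1, h2⟩ <;> constructor <;> linarith
  have hpdf : ∀ x : ℝ, gaussianPDF 0 t.toNNReal x ≤
      ENNReal.ofReal ((Real.sqrt (2 * π * t))⁻¹) := by
    intro x
    rw [gaussianPDF]
    apply ENNReal.ofReal_le_ofReal
    rw [gaussianPDFReal, Real.coe_toNNReal t ht.le]
    apply mul_le_of_le_one_right (by positivity)
    rw [Real.exp_le_one_iff]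
    apply div_nonpos_of_nonpos_of_nonneg
    · simp [sq_nonneg]
    · positivity
  rw [hset, gaussianReal_apply _ hv]
  calc ∫⁻ x in Set.Icc (a - ε) (a + ε), gaussianPDF 0 t.toNNReal x
      ≤ ∫⁻ _x in Set.Icc (a - ε) (a + ε), ENNReal.ofReal ((Real.sqrt (2 * π * t))⁻¹) :=
        lintegral_mono fun x => hpdf x
    _ = ENNReal.ofReal ((Real.sqrt (2 * π * t))⁻¹) * volume (Set.Icc (a - ε) (a + ε)) := by
        rw [setLIntegral_const]
    _ = ENNReal.ofReal ((Real.sqrt (2 * π * t))⁻¹) * ENNReal.ofReal (2 * ε) := by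
        rw [Real.volume_Icc]; congr 1; ring

/-- Probability that an affine function of `B t` and the increment `B q - B t` lies in a
band of width `2 ε` is at most `2 ε` times the sup of the density of `N (0, t)`. -/
lemma inner_bound (P : Measure Ω) [IsProbabilityMeasure P]
    (B : ℝ → Ω → ℝ) (hB : IsBrownianMotion P B) (hBmeas : ∀ s, Measurable (B s))
    {t : ℝ} (ht : 0 < t) {q : ℝ} (hq : t ≤ q) (c z ε : ℝ) :
    P {ω | |B t ω - z - c * (B q ω - B t ω)| ≤ ε} ≤
      ENNReal.ofReal ((Real.sqrt (2 * π * t))⁻¹) * ENNReal.ofReal (2 * ε) := by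
  set W : Ω → ℝ := fun ω => B q ω - B t ω with hW
  have hWm : Measurable W := (hBmeas q).sub (hBmeas t)
  have hmono : Monotone ![(0 : ℝ), t, q] := by
    intro i j hij
    fin_cases i <;> fin_cases j <;> simp_all [Fin.le_def] <;> linarith
  have h01 := (hB.2.2.1 2 ![(0 : ℝ), t, q] hmono).indepFun
    (i := 0) (j := 1) (by decide)
  have h01' : IndepFun (fun ω => B t ω - B 0 ω) W P := by simpa using h01
  have hae : (fun ω => B t ω - B 0 ω) =ᵐ[P] fun ω => B t ω :=
    hB.1.mono fun ω h => by simp [h]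
  have hVW : IndepFun (fun ω => B t ω) W P := h01'.congr hae (by rfl)
  have hmapV : P.map (fun ω => B t ω) = gaussianReal 0 t.toNNReal := by
    have h0 := hB.2.2.2 0 t le_rfl ht.le
    rw [Measure.map_congr hae.symm, h0]
    norm_num
  haveI : IsProbabilityMeasure (P.map W) := Measure.isProbabilityMeasure_map hWm.aemeasurable
  have hprod : P.map (fun ω => (B t ω, W ω)) = (P.map (fun ω => B t ω)).prod (P.map W) :=
    (indepFun_iff_map_prod_eq_prod_map_map (hBmeas t).aemeasurable hWm.aemeasurable).mp hVW
  rw [hmapV] at hprod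
  set T : Set (ℝ × ℝ) := {p | |p.1 - z - c * p.2| ≤ ε} with hT
  have hTm : MeasurableSet T := by
    apply measurableSet_le _ measurable_const
    exact ((measurable_fst.sub measurable_const).sub (measurable_snd.const_mul c)).abs
  have hev : {ω | |B t ω - z - c * (B q ω - B t ω)| ≤ ε} =
      (fun ω => (B t ω, W ω)) ⁻¹' T := rfl
  rw [hev, ← Measure.map_apply ((hBmeas t).prodMk hWm) hTm, hprod,
    Measure.prod_apply_symm hTm]
  calc ∫⁻ w, gaussianReal 0 t.toNNReal ((fun v => (v, w)) ⁻¹' T) ∂(P.map W)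
      ≤ ∫⁻ _w, ENNReal.ofReal ((Real.sqrt (2 * π * t))⁻¹) * ENNReal.ofReal (2 * ε)
          ∂(P.map W) := by
        apply lintegral_mono
        intro w
        have h : (fun v => (v, w)) ⁻¹' T = {v | |v - (z + c * w)| ≤ ε} := by
          ext v; simp only [Set.mem_preimage, hT, Set.mem_setOf_eq, sub_sub]
        show gaussianReal 0 t.toNNReal ((fun v => (v, w)) ⁻¹' T) ≤ _
        rw [h]
        exact gauss_Icc_le ht (z + c * w) ε
    _ = ENNReal.ofReal ((Real.sqrt (2 * π * t))⁻¹) * ENNReal.ofReal (2 * ε) := by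
        rw [lintegral_const, measure_univ, mul_one]

/-- The key quantitative estimate, obtained by conditioning on `(τ, Z)` through the
independence of the Brownian path from `(τ, Z)`. -/
lemma key_bound (P : Measure Ω) [IsProbabilityMeasure P]
    (B : ℝ → Ω → ℝ) (τ Z : Ω → ℝ) (hB : IsBrownianMotion P B)
    (hBmeas : ∀ s, Measurable (B s)) (hτ : Measurable τ) (hZ : Measurable Z)
    (hindep : IndepFun (fun ω t => B t ω) (fun ω => (τ ω, Z ω)) P)
    {t : ℝ} (ht : 0 < t) (n : ℕ) (ε : ℝ) :
    P {ω | t < τ ω ∧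
        |B t ω - Z ω - t / (τ ω - t) * (B (dy n (τ ω)) ω - B t ω)| ≤ ε} ≤
      ENNReal.ofReal ((Real.sqrt (2 * π * t))⁻¹) * ENNReal.ofReal (2 * ε) := by
  set D : ℝ≥0∞ := ENNReal.ofReal ((Real.sqrt (2 * π * t))⁻¹) * ENNReal.ofReal (2 * ε) with hD
  have hpm : Measurable (fun ω (s : ℝ) => B s ω) := measurable_pi_lambda _ hBmeas
  have hpairm : Measurable (fun ω => (τ ω, Z ω)) := hτ.prodMk hZ
  set S : Set ((ℝ → ℝ) × ℝ × ℝ) :=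
    {x | t < x.2.1 ∧ |x.1 t - x.2.2 - t / (x.2.1 - t) * (x.1 (dy n x.2.1) - x.1 t)| ≤ ε}
    with hS
  have m1 : Measurable fun x : (ℝ → ℝ) × ℝ × ℝ => x.1 t :=
    (measurable_pi_apply t).comp measurable_fst
  have m2 : Measurable fun x : (ℝ → ℝ) × ℝ × ℝ => x.1 (dy n x.2.1) := by
    apply measurable_eval_countable (F := fun s (x : (ℝ → ℝ) × ℝ × ℝ) => x.1 s)
      (fun s => (measurable_pi_apply s).comp measurable_fst)
      ((measurable_dy n).comp (measurable_fst.comp measurable_snd))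
    exact (countable_range_dy n).mono (Set.range_comp_subset_range _ _)
  have m3 : Measurable fun x : (ℝ → ℝ) × ℝ × ℝ => x.2.1 :=
    measurable_fst.comp measurable_snd
  have m4 : Measurable fun x : (ℝ → ℝ) × ℝ × ℝ => x.2.2 :=
    measurable_snd.comp measurable_snd
  have hSm : MeasurableSet S := by
    rw [hS, Set.setOf_and]
    apply MeasurableSet.inter
    · exact measurableSet_lt measurable_const m3
    · apply measurableSet_le _ measurable_const
      exact ((m1.sub m4).sub ((measurable_const.div (m3.sub measurable_const)).mul
        (m2.sub m1))).abs
  have hpre : {ω | t < τ ω ∧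
      |B t ω - Z ω - t / (τ ω - t) * (B (dy n (τ ω)) ω - B t ω)| ≤ ε} =
      (fun ω => ((fun s => B s ω), (τ ω, Z ω))) ⁻¹' S := rfl
  have hprod : P.map (fun ω => ((fun s => B s ω), (τ ω, Z ω))) =
      (P.map (fun ω (s : ℝ) => B s ω)).prod (P.map (fun ω => (τ ω, Z ω))) :=
    (indepFun_iff_map_prod_eq_prod_map_map hpm.aemeasurable hpairm.aemeasurable).mp hindep
  haveI : IsProbabilityMeasure (P.map (fun ω (s : ℝ) => B s ω)) :=
    Measure.isProbabilityMeasure_map hpm.aemeasurable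
  haveI : IsProbabilityMeasure (P.map (fun ω => (τ ω, Z ω))) :=
    Measure.isProbabilityMeasure_map hpairm.aemeasurable
  rw [hpre, ← Measure.map_apply (hpm.prodMk hpairm) hSm, hprod,
    Measure.prod_apply_symm hSm]
  have hbound : ∀ p : ℝ × ℝ,
      (P.map (fun ω (s : ℝ) => B s ω)) ((fun f => (f, p)) ⁻¹' S) ≤ D := by
    rintro ⟨s, z⟩
    by_cases hts : t < s
    · have hq : t ≤ dy n s := le_trans hts.le (le_dy n s)
      have hsl : (fun f : ℝ → ℝ => (f, (s, z))) ⁻¹' S =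
          {f : ℝ → ℝ | |f t - z - t / (s - t) * (f (dy n s) - f t)| ≤ ε} := by
        ext f
        simp only [Set.mem_preimage, hS, Set.mem_setOf_eq, hts, true_and]
      rw [hsl, Measure.map_apply hpm (by
        apply measurableSet_le _ measurable_const
        exact (((measurable_pi_apply t).sub measurable_const).sub
          (((measurable_pi_apply (dy n s)).sub (measurable_pi_apply t)).const_mul _)).abs)]
      exact inner_bound P B hB hBmeas ht hq (t / (s - t)) z ε
    · have hsl : (fun f : ℝ → ℝ => (f, (s, z))) ⁻¹' S = ∅ := by
        ext f
        simp only [Set.mem_preimage, hS, Set.mem_setOf_eq, Set.mem_empty_iff_false, iff_false]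
        exact fun h => hts h.1
      rw [hsl]
      simp
  calc ∫⁻ p, (P.map (fun ω (s : ℝ) => B s ω)) ((fun f => (f, p)) ⁻¹' S)
        ∂(P.map (fun ω => (τ ω, Z ω)))
      ≤ ∫⁻ _p, D ∂(P.map (fun ω => (τ ω, Z ω))) := lintegral_mono hbound
    _ = D := by rw [lintegral_const, measure_univ, mul_one]

/-- for every `t > 0` the events `{ζ_t = Z}` and `{τ ≤ t}` coincide up to a
`P`-null set. -/
theorem bridge_eq_pin_iff_time_le (P : Measure Ω) [IsProbabilityMeasure P]
    (B : ℝ → Ω → ℝ) (τ Z : Ω → ℝ)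
    (hB : IsBrownianMotion P B)
    (hBmeas : ∀ s, Measurable (B s)) (hτ : Measurable τ) (hZ : Measurable Z)
    (hτpos : ∀ ω, 0 < τ ω)
    (hindep : MutuallyIndep P B τ Z)
    (t : ℝ) (ht : 0 < t) :
    P (({ω | bridge B τ Z t ω = Z ω} \ {ω | τ ω ≤ t}) ∪
        ({ω | τ ω ≤ t} \ {ω | bridge B τ Z t ω = Z ω})) = 0 := by
  have h2 : {ω | τ ω ≤ t} \ {ω | bridge B τ Z t ω = Z ω} = ∅ := by
    rw [Set.eq_empty_iff_forall_notMem]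
    rintro ω ⟨hle, hne⟩
    apply hne
    show bridge B τ Z t ω = Z ω
    rw [bridge, min_eq_right hle, div_self (hτpos ω).ne']
    ring
  have h1 : {ω | bridge B τ Z t ω = Z ω} \ {ω | τ ω ≤ t} =
      {ω | t < τ ω ∧ B t ω - Z ω - t / (τ ω - t) * (B (τ ω) ω - B t ω) = 0} := by
    ext ω
    simp only [Set.mem_diff, Set.mem_setOf_eq, not_le]
    have hs : τ ω ≠ 0 := (hτpos ω).ne'
    constructor
    · rintro ⟨heq, hlt⟩
      refine ⟨hlt, ?_⟩
      rw [bridge, min_eq_left hlt.le] at heq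
      have hst : τ ω - t ≠ 0 := sub_ne_zero.2 hlt.ne'
      field_simp at heq ⊢
      linear_combination heq
    · rintro ⟨hlt, heq⟩
      refine ⟨?_, hlt⟩
      show bridge B τ Z t ω = Z ω
      rw [bridge, min_eq_left hlt.le]
      have hst : τ ω - t ≠ 0 := sub_ne_zero.2 hlt.ne'
      field_simp at heq ⊢
      linear_combination heq
  rw [h1, h2, Set.union_empty]
  refine le_antisymm ?_ (by simp)
  have main : ∀ ε : ℝ, 0 < ε →
      P {ω | t < τ ω ∧ B t ω - Z ω - t / (τ ω - t) * (B (τ ω) ω - B t ω) = 0} ≤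
        ENNReal.ofReal ((Real.sqrt (2 * π * t))⁻¹) * ENNReal.ofReal (2 * ε) := by
    intro ε hε
    set A : ℕ → Set Ω := fun n => {ω | t < τ ω ∧
      |B t ω - Z ω - t / (τ ω - t) * (B (dy n (τ ω)) ω - B t ω)| ≤ ε} with hA
    set s : ℕ → Set Ω := fun N => ⋂ n, ⋂ (_ : N ≤ n), A n with hs
    have hsmono : Monotone s := by
      intro N M hNM x hx
      exact Set.mem_iInter₂.2 fun n hn => Set.mem_iInter₂.1 hx n (hNM.trans hn)
    have hsub : {ω | t < τ ω ∧ B t ω - Z ω - t / (τ ω - t) * (B (τ ω) ω - B t ω) = 0} ⊆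
        {ω | ¬ Continuous fun u => B u ω} ∪ ⋃ N, s N := by
      rintro ω ⟨hlt, heq⟩
      by_cases hcont : Continuous fun u => B u ω
      · right
        have h1' : Tendsto (fun n => B (dy n (τ ω)) ω) atTop (nhds (B (τ ω) ω)) :=
          (hcont.tendsto (τ ω)).comp (tendsto_dy (τ ω))
        have h2' : Tendsto
            (fun n => B t ω - Z ω - t / (τ ω - t) * (B (dy n (τ ω)) ω - B t ω)) atTop
            (nhds (B t ω - Z ω - t / (τ ω - t) * (B (τ ω) ω - B t ω))) :=
          tendsto_const_nhds.sub ((h1'.sub tendsto_const_nhds).const_mul _)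
        rw [heq] at h2'
        have h4 := (NormedAddCommGroup.tendsto_nhds_zero.mp h2') ε hε
        rw [eventually_atTop] at h4
        obtain ⟨N, hN⟩ := h4
        exact Set.mem_iUnion.2 ⟨N, Set.mem_iInter₂.2 fun n hn =>
          ⟨hlt, le_of_lt (by simpa [Real.norm_eq_abs] using hN n hn)⟩⟩
      · left; exact hcont
    calc P {ω | t < τ ω ∧ B t ω - Z ω - t / (τ ω - t) * (B (τ ω) ω - B t ω) = 0}
        ≤ P ({ω | ¬ Continuous fun u => B u ω} ∪ ⋃ N, s N) := measure_mono hsub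
      _ ≤ P {ω | ¬ Continuous fun u => B u ω} + P (⋃ N, s N) := measure_union_le _ _
      _ = P (⋃ N, s N) := by rw [ae_iff.mp hB.2.1, zero_add]
      _ = ⨆ N, P (s N) := hsmono.measure_iUnion
      _ ≤ ENNReal.ofReal ((Real.sqrt (2 * π * t))⁻¹) * ENNReal.ofReal (2 * ε) :=
          iSup_le fun N => le_trans (measure_mono (Set.iInter₂_subset N le_rfl))
            (key_bound P B τ Z hB hBmeas hτ hZ hindep.1 ht N ε)
  have hlim : Tendsto (fun m : ℕ => ENNReal.ofReal ((Real.sqrt (2 * π * t))⁻¹) *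
      ENNReal.ofReal (2 * (1 / (m + 1 : ℝ)))) atTop (nhds 0) := by
    have hr : Tendsto (fun m : ℕ => (2 : ℝ) * (1 / (m + 1 : ℝ))) atTop (nhds 0) := by
      simpa using tendsto_one_div_add_atTop_nhds_zero_nat.const_mul (2 : ℝ)
    have h0 : Tendsto (fun m : ℕ => ENNReal.ofReal (2 * (1 / (m + 1 : ℝ)))) atTop
        (nhds 0) := by
      rw [← ENNReal.ofReal_zero]
      exact (ENNReal.continuous_ofReal.tendsto 0).comp hr
    simpa using ENNReal.Tendsto.const_mul h0
      (Or.inr ENNReal.ofReal_ne_top)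
  exact ge_of_tendsto' hlim fun m => main (1 / (m + 1 : ℝ)) (by positivity)

end LevyBridge
end
end

section
/- Assume the law P_Z of Z is singular with respect to Lebesgue measure, i.e. P_Z is concentrated on a Borel set 𝒵 ⊆ ℝ of Lebesgue measure zero. Then for every t > 0, P(({ζ_t ∈ 𝒵} \ {τ ≤ t}) ∪ ({τ ≤ t} \ {ζ_t ∈ 𝒵})) = 0; in particular there exists a set A measurable with respect to σ(ζ_t) with P(A Δ {τ ≤ t}) = 0, so {τ ≤ t} ∈ σ(ζ_t) ∨ 𝓝_P. -/
open MeasureTheory ProbabilityTheory Real Set Filter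
open scoped NNReal Topology ENNReal

noncomputable section

namespace LevyBridge

variable {Ω : Type*} [MeasurableSpace Ω]

/-! ### Auxiliary machinery: a jointly measurable evaluation map on path space -/

/-- Dyadic upper approximation of a real number. -/
def dyadic (n : ℕ) (s : ℝ) : ℝ := (⌈s * 2 ^ n⌉ : ℤ) / 2 ^ n

lemma tendsto_dyadic (s : ℝ) : Tendsto (fun n => dyadic n s) atTop (𝓝 s) := by
  have h1 : ∀ n, s ≤ dyadic n s := by
    intro n
    rw [dyadic, le_div_iff₀ (by positivity)]
    exact Int.le_ceil _
  have h2 : ∀ n, dyadic n s ≤ s + ((1 : ℝ) / 2) ^ n := by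
    intro n
    rw [dyadic, div_le_iff₀ (by positivity)]
    calc (⌈s * 2 ^ n⌉ : ℝ) ≤ s * 2 ^ n + 1 := le_of_lt (Int.ceil_lt_add_one _)
      _ = (s + (1 / 2) ^ n) * 2 ^ n := by
          rw [add_mul]
          congr 1
          rw [div_pow, one_pow, div_mul_cancel₀]
          positivity
  have hlim : Tendsto (fun n : ℕ => s + ((1 : ℝ) / 2) ^ n) atTop (𝓝 (s + 0)) :=
    tendsto_const_nhds.add
      (tendsto_pow_atTop_nhds_zero_of_lt_one (by norm_num) (by norm_num))
  rw [add_zero] at hlim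
  exact tendsto_of_tendsto_of_tendsto_of_le_of_le tendsto_const_nhds hlim h1 h2

lemma measurable_evalDyadic (n : ℕ) :
    Measurable (fun p : (ℝ → ℝ) × ℝ => p.1 (dyadic n p.2)) := by
  have h : Measurable (fun q : (ℝ → ℝ) × ℤ => q.1 ((q.2 : ℝ) / 2 ^ n)) := by
    apply measurable_from_prod_countable_left
    intro k
    exact measurable_pi_apply ((k : ℝ) / 2 ^ n)
  have heq : (fun p : (ℝ → ℝ) × ℝ => p.1 (dyadic n p.2))
      = fun p => (fun q : (ℝ → ℝ) × ℤ => q.1 ((q.2 : ℝ) / 2 ^ n)) (p.1, ⌈p.2 * 2 ^ n⌉) := rfl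
  rw [heq]
  exact h.comp (measurable_fst.prodMk ((measurable_snd.mul_const _).ceil))

/-- A jointly measurable evaluation map on path space which coincides with honest
evaluation on continuous paths. -/
def ev (p : (ℝ → ℝ) × ℝ) : ℝ := limsup (fun n => p.1 (dyadic n p.2)) atTop

lemma measurable_ev : Measurable ev :=
  Measurable.limsup fun n => measurable_evalDyadic n

lemma ev_eq {f : ℝ → ℝ} (hf : Continuous f) (s : ℝ) : ev (f, s) = f s :=
  ((hf.tendsto s).comp (tendsto_dyadic s)).limsup_eq

/-! ### Independence and absolute continuity lemmas -/

lemma indep_measure_eq_lintegral {α β : Type*} [MeasurableSpace α] [MeasurableSpace β]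
    {P : Measure Ω} [IsProbabilityMeasure P] {X : Ω → α} {Y : Ω → β}
    (hX : Measurable X) (hY : Measurable Y) (h : IndepFun X Y P)
    {S : Set (α × β)} (hS : MeasurableSet S) :
    P ((fun ω => (X ω, Y ω)) ⁻¹' S) = ∫⁻ x, (P.map Y) {y | (x, y) ∈ S} ∂(P.map X) := by
  haveI : IsProbabilityMeasure (P.map Y) := Measure.isProbabilityMeasure_map hY.aemeasurable
  rw [← Measure.map_apply (hX.prodMk hY) hS,
    (indepFun_iff_map_prod_eq_prod_map_map hX.aemeasurable hY.aemeasurable).mp h,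
    Measure.prod_apply hS]
  rfl

lemma affine_gauss_null {P : Measure Ω} [IsProbabilityMeasure P]
    {X Y : Ω → ℝ} (hX : Measurable X) (hY : Measurable Y)
    (hind : IndepFun Y X P) {v : ℝ≥0} (hv : v ≠ 0)
    (hlaw : P.map X = gaussianReal 0 v)
    {a : ℝ} (ha : a ≠ 0) (b c : ℝ) {𝒵 : Set ℝ} (h𝒵 : MeasurableSet 𝒵)
    (h𝒵0 : volume 𝒵 = 0) :
    P {ω | a * X ω + b * Y ω + c ∈ 𝒵} = 0 := by
  have hgauss : ∀ N : Set ℝ, volume N = 0 → gaussianReal 0 v N = 0 := by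
    intro N h0
    rw [gaussianReal_of_var_ne_zero _ hv]
    exact (withDensity_absolutelyContinuous volume _) h0
  have h0 : ∀ y : ℝ, (P.map X) {x | a * x + b * y + c ∈ 𝒵} = 0 := by
    intro y
    rw [hlaw]
    apply hgauss
    have hset : {x : ℝ | a * x + b * y + c ∈ 𝒵}
        = (fun x : ℝ => a * x) ⁻¹' ((fun u : ℝ => u + (b * y + c)) ⁻¹' 𝒵) := by
      ext x; simp [Set.mem_preimage, add_assoc]
    rw [hset, Real.volume_preimage_mul_left ha, measure_preimage_add_right, h𝒵0, mul_zero]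
  have hS : MeasurableSet {p : ℝ × ℝ | a * p.2 + b * p.1 + c ∈ 𝒵} := by
    have : Measurable fun p : ℝ × ℝ => a * p.2 + b * p.1 + c := by
      exact ((measurable_snd.const_mul a).add (measurable_fst.const_mul b)).add_const c
    exact this h𝒵
  have key := indep_measure_eq_lintegral hY hX hind hS
  have hset2 : {ω | a * X ω + b * Y ω + c ∈ 𝒵}
      = (fun ω => (Y ω, X ω)) ⁻¹' {p : ℝ × ℝ | a * p.2 + b * p.1 + c ∈ 𝒵} := rfl
  rw [hset2, key]
  have : ∀ y : ℝ, (P.map X) {x | (y, x) ∈ {p : ℝ × ℝ | a * p.2 + b * p.1 + c ∈ 𝒵}} = 0 :=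
    fun y => h0 y
  simp only [this, lintegral_zero]

/-- if the law of `Z` is carried by a Borel set `𝒵` of Lebesgue measure
zero, then for every `t > 0` the events `{ζ_t ∈ 𝒵}` and `{τ ≤ t}` coincide up to a
`P`-null set; in particular `{τ ≤ t}` agrees with a `σ(ζ_t)`-measurable set up to a
`P`-null set, i.e. `{τ ≤ t} ∈ σ(ζ_t) ∨ 𝓝_P`. -/
theorem tau_le_mem_completed_sigma_of_singular (P : Measure Ω) [IsProbabilityMeasure P]
    (B : ℝ → Ω → ℝ) (τ Z : Ω → ℝ)
    (hB : IsBrownianMotion P B)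
    (hBmeas : ∀ s, Measurable (B s)) (hτ : Measurable τ) (hZ : Measurable Z)
    (hτpos : ∀ ω, 0 < τ ω)
    (hindep : MutuallyIndep P B τ Z)
    (𝒵 : Set ℝ) (h𝒵 : MeasurableSet 𝒵) (h𝒵null : volume 𝒵 = 0)
    (hZ𝒵 : P {ω | Z ω ∈ 𝒵} = 1)
    (t : ℝ) (ht : 0 < t) :
    P (({ω | bridge B τ Z t ω ∈ 𝒵} \ {ω | τ ω ≤ t}) ∪
        ({ω | τ ω ≤ t} \ {ω | bridge B τ Z t ω ∈ 𝒵})) = 0 ∧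
    ∃ A : Set Ω,
      MeasurableSet[MeasurableSpace.comap (bridge B τ Z t) inferInstance] A ∧
      P ((A \ {ω | τ ω ≤ t}) ∪ ({ω | τ ω ≤ t} \ A)) = 0 := by
  obtain ⟨hB0, hBcont, hBincr, hBlaw⟩ := hB
  -- On `{τ ≤ t}` the bridge equals `Z`.
  have hbridge_eq : ∀ ω, τ ω ≤ t → bridge B τ Z t ω = Z ω := by
    intro ω hω
    simp only [bridge, min_eq_right hω, div_self (hτpos ω).ne', one_mul]
    ring
  have hZcompl : P {ω | Z ω ∉ 𝒵} = 0 := by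
    have hc : {ω | Z ω ∉ 𝒵} = (Z ⁻¹' 𝒵)ᶜ := rfl
    have hone : P (Z ⁻¹' 𝒵) = 1 := hZ𝒵
    rw [hc, measure_compl (hZ h𝒵) (measure_ne_top _ _), measure_univ, hone, tsub_self]
  have hpart1 : P ({ω | τ ω ≤ t} \ {ω | bridge B τ Z t ω ∈ 𝒵}) = 0 := by
    apply measure_mono_null _ hZcompl
    rintro ω ⟨h1, h2⟩
    intro hmem
    exact h2 (by rw [Set.mem_setOf_eq, hbridge_eq ω h1]; exact hmem)
  -- the path map
  set path : Ω → ℝ → ℝ := fun ω s => B s ω with hpathdef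
  have hpath : Measurable path := measurable_pi_lambda _ fun s => hBmeas s
  -- the key slice estimate
  have hslice : ∀ s z : ℝ, t < s →
      P {ω | B t ω - t / s * ev (path ω, s) + t / s * z ∈ 𝒵} = 0 := by
    intro s z hts
    set X : Ω → ℝ := fun ω => B t ω - B 0 ω with hXdef
    set Y : Ω → ℝ := fun ω => B s ω - B t ω with hYdef
    have hXm : Measurable X := (hBmeas t).sub (hBmeas 0)
    have hYm : Measurable Y := (hBmeas s).sub (hBmeas t)
    have hmono : Monotone ![0, t, s] := by
      rw [Fin.monotone_iff_le_succ]
      intro i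
      fin_cases i <;> simp <;> linarith
    have hii := hBincr 2 ![0, t, s] hmono
    have hXY : IndepFun X Y P := by
      have h := hii.indepFun (show (0 : Fin 2) ≠ 1 by decide)
      simpa [hXdef, hYdef] using h
    have hlawX : P.map X = gaussianReal 0 t.toNNReal := by
      have h := hBlaw 0 t le_rfl ht.le
      simpa using h
    have ha : (1 : ℝ) - t / s ≠ 0 := by
      have h1 : t / s < 1 := (div_lt_one (ht.trans hts)).2 hts
      linarith
    have hv : t.toNNReal ≠ 0 := by
      simp [Real.toNNReal_eq_zero, not_le, ht]
    have hnull := affine_gauss_null hXm hYm hXY.symm hv hlawX ha (-(t / s)) (t / s * z)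
      h𝒵 h𝒵null
    have hae : {ω | B t ω - t / s * ev (path ω, s) + t / s * z ∈ 𝒵}
        =ᵐ[P] {ω | (1 - t / s) * X ω + -(t / s) * Y ω + t / s * z ∈ 𝒵} := by
      rw [Filter.eventuallyEq_set]
      filter_upwards [hB0, hBcont] with ω h0 hc
      have hev : ev (path ω, s) = B s ω := ev_eq hc s
      have harith : B t ω - t / s * ev (path ω, s) + t / s * z
          = (1 - t / s) * X ω + -(t / s) * Y ω + t / s * z := by
        simp only [hev, hXdef, hYdef, h0]
        ring
      simp only [Set.mem_setOf_eq, harith]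
    rw [measure_congr hae]
    exact hnull
  -- the set in the product of `(length, pin)`-space and path space
  set S : Set ((ℝ × ℝ) × (ℝ → ℝ)) :=
    {p | t < p.1.1 ∧ p.2 t - t / p.1.1 * ev (p.2, p.1.1) + t / p.1.1 * p.1.2 ∈ 𝒵}
    with hSdef
  have hSmeas : MeasurableSet S := by
    apply MeasurableSet.inter
    · exact measurableSet_lt measurable_const measurable_fst.fst
    · have hg : Measurable fun p : (ℝ × ℝ) × (ℝ → ℝ) =>
          p.2 t - t / p.1.1 * ev (p.2, p.1.1) + t / p.1.1 * p.1.2 := by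
        have h1 : Measurable fun p : (ℝ × ℝ) × (ℝ → ℝ) => p.2 t :=
          (measurable_pi_apply t).comp measurable_snd
        have h2 : Measurable fun p : (ℝ × ℝ) × (ℝ → ℝ) => ev (p.2, p.1.1) :=
          measurable_ev.comp (measurable_snd.prodMk measurable_fst.fst)
        have h3 : Measurable fun p : (ℝ × ℝ) × (ℝ → ℝ) => t / p.1.1 :=
          measurable_const.div measurable_fst.fst
        exact (h1.sub (h3.mul h2)).add (h3.mul measurable_fst.snd)
      exact hg h𝒵
  have houter : P ((fun ω => ((τ ω, Z ω), path ω)) ⁻¹' S) = 0 := by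
    have hind2 : IndepFun (fun ω => (τ ω, Z ω)) path P := hindep.1.symm
    rw [indep_measure_eq_lintegral (hτ.prodMk hZ) hpath hind2 hSmeas]
    have hzero : ∀ p : ℝ × ℝ, (P.map path) {f | (p, f) ∈ S} = 0 := by
      rintro ⟨s, z⟩
      by_cases hts : t < s
      · have hset : {f : ℝ → ℝ | ((s, z), f) ∈ S}
            = (fun f : ℝ → ℝ => f t - t / s * ev (f, s) + t / s * z) ⁻¹' 𝒵 := by
          ext f
          simp [hSdef, hts]
        have hgm : Measurable fun f : ℝ → ℝ => f t - t / s * ev (f, s) + t / s * z := by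
          have h2 : Measurable fun f : ℝ → ℝ => ev (f, s) :=
            measurable_ev.comp (measurable_id.prodMk measurable_const)
          exact (((measurable_pi_apply t).sub (h2.const_mul _)).add_const _)
        rw [hset, Measure.map_apply hpath (hgm h𝒵)]
        exact hslice s z hts
      · have hset : {f : ℝ → ℝ | ((s, z), f) ∈ S} = ∅ := by
          ext f; simp [hSdef, hts]
        simp [hset]
    simp only [hzero, lintegral_zero]
  have hcontnull : P {ω | ¬ Continuous (path ω)} = 0 := ae_iff.mp hBcont
  have hpart2 : P ({ω | bridge B τ Z t ω ∈ 𝒵} \ {ω | τ ω ≤ t}) = 0 := by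
    apply measure_mono_null _ (measure_union_null hcontnull houter)
    rintro ω ⟨h1, h2⟩
    by_cases hc : Continuous (path ω)
    · right
      have htlt : t < τ ω := not_le.mp h2
      have hmin : min t (τ ω) = t := min_eq_left htlt.le
      refine ⟨htlt, ?_⟩
      have hev : ev (path ω, τ ω) = B (τ ω) ω := ev_eq hc (τ ω)
      show path ω t - t / τ ω * ev (path ω, τ ω) + t / τ ω * Z ω ∈ 𝒵
      rw [hev]
      have : path ω t - t / τ ω * B (τ ω) ω + t / τ ω * Z ω = bridge B τ Z t ω := by
        simp only [bridge, hmin, hpathdef]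
      rw [this]
      exact h1
    · exact Or.inl hc
  have hmain : P (({ω | bridge B τ Z t ω ∈ 𝒵} \ {ω | τ ω ≤ t}) ∪
      ({ω | τ ω ≤ t} \ {ω | bridge B τ Z t ω ∈ 𝒵})) = 0 :=
    measure_union_null hpart2 hpart1
  refine ⟨hmain, {ω | bridge B τ Z t ω ∈ 𝒵}, ⟨𝒵, h𝒵, rfl⟩, hmain⟩

end LevyBridge
end
end

section
/- Fix r > 0 and let ζ^{r,Z}_t := (B_t − (t/r)B_r + (t/r)Z)·1_{{t<r}} + Z·1_{{t≥r}} be the Brownian bridge with deterministic length r and random pinning point Z. Then for every t > 0 and every bounded measurable g : ℝ → ℝ, P-almost surely: E[g(Z) | σ(ζ^{r,Z}_t)] = g(ζ^{r,Z}_t)·1_{{r ≤ t}} + ( ∫_ℝ g(z) φ_{r−t}(z−ζ^{r,Z}_t)/φ_r(z) P_Z(dz) / ∫_ℝ φ_{r−t}(z−ζ^{r,Z}_t)/φ_r(z) P_Z(dz) )·1_{{t < r}}. -/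
open MeasureTheory ProbabilityTheory Real Set

noncomputable section

namespace LevyBridge

variable {Ω : Type*} [MeasurableSpace Ω]

/-- The Brownian bridge with deterministic length `r` and random pinning point `Z`. -/
def detBridge (B : ℝ → Ω → ℝ) (Z : Ω → ℝ) (r t : ℝ) (ω : Ω) : ℝ :=
  if t < r then B t ω - (t / r) * B r ω + (t / r) * Z ω else Z ω

/-! ### Auxiliary lemmas -/

open scoped NNReal ENNReal

lemma aux_pdf_factor (v w : ℝ≥0) (hv : v ≠ 0) (hw : w ≠ 0) (x y : ℝ) :
    gaussianPDFReal 0 v x * gaussianPDFReal 0 w (y - x) =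
      gaussianPDFReal 0 (v + w) y * gaussianPDFReal ((v : ℝ) * y / (v + w)) (v * w / (v + w)) x := by
  have hv' : (0:ℝ) < v := lt_of_le_of_ne v.coe_nonneg (by exact_mod_cast (Ne.symm hv))
  have hw' : (0:ℝ) < w := lt_of_le_of_ne w.coe_nonneg (by exact_mod_cast (Ne.symm hw))
  have hvw : (0:ℝ) < (v:ℝ) + w := by linarith
  simp only [gaussianPDFReal, sub_zero, NNReal.coe_add, NNReal.coe_div, NNReal.coe_mul]
  have hsqrt : Real.sqrt (2 * π * v) * Real.sqrt (2 * π * w)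
      = Real.sqrt (2 * π * ((v:ℝ) + w)) * Real.sqrt (2 * π * ((v:ℝ) * w / ((v:ℝ) + w))) := by
    rw [← Real.sqrt_mul (by positivity), ← Real.sqrt_mul (by positivity)]
    congr 1
    field_simp
  have hexp : Real.exp (-x ^ 2 / (2 * v)) * Real.exp (-(y - x) ^ 2 / (2 * w))
      = Real.exp (-y ^ 2 / (2 * ((v:ℝ) + w))) *
        Real.exp (-(x - (v:ℝ) * y / ((v:ℝ) + w)) ^ 2 / (2 * ((v:ℝ) * w / ((v:ℝ) + w)))) := by
    rw [← Real.exp_add, ← Real.exp_add]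
    congr 1
    field_simp
    ring
  calc (Real.sqrt (2 * π * v))⁻¹ * Real.exp (-x ^ 2 / (2 * v)) *
        ((Real.sqrt (2 * π * w))⁻¹ * Real.exp (-(y - x) ^ 2 / (2 * w)))
      = (Real.sqrt (2 * π * v) * Real.sqrt (2 * π * w))⁻¹ *
        (Real.exp (-x ^ 2 / (2 * v)) * Real.exp (-(y - x) ^ 2 / (2 * w))) := by
        rw [mul_inv]; ring
    _ = _ := by rw [hsqrt, hexp, mul_inv]; ring

lemma aux_pdf_conv (v w : ℝ≥0) (hv : v ≠ 0) (hw : w ≠ 0) (y : ℝ) :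
    ∫ x, gaussianPDFReal 0 v x * gaussianPDFReal 0 w (y - x) = gaussianPDFReal 0 (v + w) y := by
  have huv : v * w / (v + w) ≠ 0 := by
    rw [div_ne_zero_iff]
    exact ⟨mul_ne_zero hv hw, by simp [hv, hw, ← NNReal.coe_inj]⟩
  calc ∫ x, gaussianPDFReal 0 v x * gaussianPDFReal 0 w (y - x)
      = ∫ x, gaussianPDFReal 0 (v + w) y *
          gaussianPDFReal ((v : ℝ) * y / (v + w)) (v * w / (v + w)) x := by
        simp_rw [aux_pdf_factor v w hv hw _ y]
    _ = gaussianPDFReal 0 (v + w) y := by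
        rw [integral_const_mul, integral_gaussianPDFReal_eq_one _ huv, mul_one]

lemma aux_pdf_le (v : ℝ≥0) (x : ℝ) : gaussianPDFReal 0 v x ≤ (Real.sqrt (2 * π * v))⁻¹ := by
  rw [gaussianPDFReal]
  exact mul_le_of_le_one_right (by positivity)
    (Real.exp_le_one_iff.2 (div_nonpos_of_nonpos_of_nonneg (neg_nonpos.2 (sq_nonneg _))
      (by positivity)))

lemma aux_lintegral_pdf_conv (v w : ℝ≥0) (hv : v ≠ 0) (hw : w ≠ 0) (y : ℝ) :
    ∫⁻ x, gaussianPDF 0 v x * gaussianPDF 0 w (y - x) = gaussianPDF 0 (v + w) y := by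
  have hmeas : Measurable fun x => gaussianPDFReal 0 v x * gaussianPDFReal 0 w (y - x) :=
    (measurable_gaussianPDFReal 0 v).mul
      ((measurable_gaussianPDFReal 0 w).comp (measurable_const.sub measurable_id))
  have hint : Integrable (fun x => gaussianPDFReal 0 v x * gaussianPDFReal 0 w (y - x)) := by
    refine Integrable.mono' (g := fun x => (Real.sqrt (2 * π * w))⁻¹ * gaussianPDFReal 0 v x)
      ((integrable_gaussianPDFReal 0 v).const_mul _) hmeas.aestronglyMeasurable
      (Filter.Eventually.of_forall fun x => ?_)
    rw [norm_eq_abs, abs_of_nonneg (mul_nonneg (gaussianPDFReal_nonneg _ _ _)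
      (gaussianPDFReal_nonneg _ _ _))]
    show _ ≤ (Real.sqrt (2 * π * w))⁻¹ * gaussianPDFReal 0 v x
    rw [mul_comm ((Real.sqrt (2 * π * w))⁻¹)]
    exact mul_le_mul_of_nonneg_left (aux_pdf_le w _) (gaussianPDFReal_nonneg _ _ _)
  simp_rw [gaussianPDF, ← ENNReal.ofReal_mul (gaussianPDFReal_nonneg 0 v _)]
  rw [← MeasureTheory.ofReal_integral_eq_lintegral_ofReal hint
    (Filter.Eventually.of_forall fun x => mul_nonneg (gaussianPDFReal_nonneg _ _ _)
      (gaussianPDFReal_nonneg _ _ _)),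
    aux_pdf_conv v w hv hw y]

lemma aux_map_add_gauss (v w : ℝ≥0) (hv : v ≠ 0) (hw : w ≠ 0) :
    Measure.map (fun p : ℝ × ℝ => p.1 + p.2) ((gaussianReal 0 v).prod (gaussianReal 0 w))
      = gaussianReal 0 (v + w) := by
  have hpdfw : ∀ x : ℝ, (fun y => gaussianPDF x w y) = fun y => gaussianPDF 0 w (y - x) := by
    intro x
    funext y
    unfold gaussianPDF
    rw [gaussianPDFReal_sub, zero_add]
  ext s hs
  rw [Measure.map_apply (by fun_prop : Measurable fun p : ℝ × ℝ => p.1 + p.2) hs,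
    Measure.prod_apply ((by fun_prop : Measurable fun p : ℝ × ℝ => p.1 + p.2) hs)]
  have hslice : ∀ x : ℝ, (gaussianReal 0 w) (Prod.mk x ⁻¹' ((fun p : ℝ × ℝ => p.1 + p.2) ⁻¹' s))
      = ∫⁻ y in s, gaussianPDF 0 w (y - x) := by
    intro x
    have : (Prod.mk x ⁻¹' ((fun p : ℝ × ℝ => p.1 + p.2) ⁻¹' s)) = (fun y => x + y) ⁻¹' s := rfl
    rw [this, ← Measure.map_apply (measurable_const_add x) hs, gaussianReal_map_const_add,
      zero_add, gaussianReal_of_var_ne_zero _ hw, withDensity_apply _ hs, hpdfw x]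
  simp_rw [hslice]
  rw [gaussianReal_of_var_ne_zero _ hv, lintegral_withDensity_eq_lintegral_mul _
    (measurable_gaussianPDF 0 v)
    (Measurable.lintegral_prod_right' (f := fun p : ℝ × ℝ => gaussianPDF 0 w (p.2 - p.1))
      ((measurable_gaussianPDF 0 w).comp (measurable_snd.sub measurable_fst)))]
  simp only [Pi.mul_apply]
  have : (fun x => gaussianPDF 0 v x * ∫⁻ y in s, gaussianPDF 0 w (y - x))
      = fun x => ∫⁻ y in s, gaussianPDF 0 v x * gaussianPDF 0 w (y - x) := by
    funext x
    exact (lintegral_const_mul _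
      ((measurable_gaussianPDF 0 w).comp (measurable_id.sub measurable_const))).symm
  rw [this, lintegral_lintegral_swap]
  · rw [gaussianReal_of_var_ne_zero _ (by simp [hv, hw, ← NNReal.coe_inj] : v + w ≠ 0),
      withDensity_apply _ hs]
    refine setLIntegral_congr_fun hs (fun y _ => ?_)
    exact aux_lintegral_pdf_conv v w hv hw y
  · exact (((measurable_gaussianPDF 0 v).comp measurable_fst).mul
      ((measurable_gaussianPDF 0 w).comp (measurable_snd.sub measurable_fst))).aemeasurable

lemma aux_law_sum (P : Measure Ω) [IsProbabilityMeasure P] {X₁ X₂ : Ω → ℝ}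
    (hX1 : Measurable X₁) (hX2 : Measurable X₂) (hi : IndepFun X₁ X₂ P) {v w : ℝ≥0}
    (h1 : Measure.map X₁ P = gaussianReal 0 v) (h2 : Measure.map X₂ P = gaussianReal 0 w)
    (hv : v ≠ 0) (hw : w ≠ 0) :
    Measure.map (fun ω => X₁ ω + X₂ ω) P = gaussianReal 0 (v + w) := by
  have hprod := (indepFun_iff_map_prod_eq_prod_map_map hX1.aemeasurable hX2.aemeasurable).mp hi
  calc Measure.map (fun ω => X₁ ω + X₂ ω) P
      = Measure.map ((fun p : ℝ × ℝ => p.1 + p.2) ∘ fun ω => (X₁ ω, X₂ ω)) P := rfl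
    _ = Measure.map (fun p : ℝ × ℝ => p.1 + p.2) (Measure.map (fun ω => (X₁ ω, X₂ ω)) P) :=
        (Measure.map_map (measurable_fst.add measurable_snd) (hX1.prodMk hX2)).symm
    _ = gaussianReal 0 (v + w) := by rw [hprod, h1, h2, aux_map_add_gauss v w hv hw]

lemma aux_law_X (P : Measure Ω) [IsProbabilityMeasure P] {B : ℝ → Ω → ℝ}
    (hB : IsBrownianMotion P B) (hBmeas : ∀ s, Measurable (B s))
    {r t : ℝ} (ht : 0 < t) (htr : t < r) {σ2 : ℝ≥0} (hσ2 : (σ2 : ℝ) = t * (r - t) / r) :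
    Measure.map (fun ω => B t ω - t / r * B r ω) P = gaussianReal 0 σ2 := by
  obtain ⟨h0, -, h3, h4⟩ := hB
  have hr : 0 < r := ht.trans htr
  set c : ℝ := t / r with hc
  have hc1 : c < 1 := (div_lt_one hr).2 htr
  have hc0 : 0 < c := div_pos ht hr
  set I₁ : Ω → ℝ := fun ω => B t ω - B 0 ω with hI₁
  set I₂ : Ω → ℝ := fun ω => B r ω - B t ω with hI₂
  have hI₁m : Measurable I₁ := (hBmeas t).sub (hBmeas 0)
  have hI₂m : Measurable I₂ := (hBmeas r).sub (hBmeas t)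
  have hmono : Monotone (![0, t, r] : Fin 3 → ℝ) := by
    intro i j hij
    fin_cases i <;> fin_cases j <;>
      simp_all [Fin.le_def] <;> linarith
  have hindep : IndepFun I₁ I₂ P := by
    have := (h3 2 ![0, t, r] hmono).indepFun (i := 0) (j := 1) (by decide)
    simpa [hI₁, hI₂, Fin.succ, Fin.castSucc] using this
  have hlaw1 : Measure.map I₁ P = gaussianReal 0 t.toNNReal := by
    have := h4 0 t le_rfl ht.le
    simpa using this
  have hlaw2 : Measure.map I₂ P = gaussianReal 0 (r - t).toNNReal := h4 t r ht.le htr.le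
  have hX1law : Measure.map (fun ω => (1 - c) * I₁ ω) P
      = gaussianReal 0 ((NNReal.mk ((1 - c) ^ 2) (sq_nonneg _)) * t.toNNReal) := by
    have : Measure.map (fun ω => (1 - c) * I₁ ω) P
        = Measure.map ((1 - c) * ·) (Measure.map I₁ P) :=
      (Measure.map_map (measurable_const_mul _) hI₁m).symm
    rw [this, hlaw1, gaussianReal_map_const_mul, mul_zero]
  have hX2law : Measure.map (fun ω => (-c) * I₂ ω) P
      = gaussianReal 0 ((NNReal.mk ((-c) ^ 2) (sq_nonneg _)) * (r - t).toNNReal) := by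
    have : Measure.map (fun ω => (-c) * I₂ ω) P
        = Measure.map ((-c) * ·) (Measure.map I₂ P) :=
      (Measure.map_map (measurable_const_mul _) hI₂m).symm
    rw [this, hlaw2, gaussianReal_map_const_mul, mul_zero]
  have hindep' : IndepFun (fun ω => (1 - c) * I₁ ω) (fun ω => (-c) * I₂ ω) P :=
    hindep.comp (measurable_const_mul _) (measurable_const_mul _)
  have hv1 : ((NNReal.mk ((1 - c) ^ 2) (sq_nonneg _)) * t.toNNReal : ℝ≥0) ≠ 0 := by
    rw [← NNReal.coe_ne_zero]
    push_cast
    rw [Real.coe_toNNReal _ ht.le]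
    exact ne_of_gt (mul_pos (pow_pos (by linarith) 2) ht)
  have hv2 : ((NNReal.mk ((-c) ^ 2) (sq_nonneg _)) * (r - t).toNNReal : ℝ≥0) ≠ 0 := by
    rw [← NNReal.coe_ne_zero]
    push_cast
    rw [Real.coe_toNNReal _ (by linarith : (0:ℝ) ≤ r - t)]
    exact ne_of_gt (mul_pos (by nlinarith) (by linarith))
  have hsum := aux_law_sum P ((measurable_const_mul _).comp hI₁m)
    ((measurable_const_mul _).comp hI₂m) hindep' hX1law hX2law hv1 hv2
  have hae : (fun ω => B t ω - c * B r ω)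
      =ᵐ[P] fun ω => (1 - c) * I₁ ω + (-c) * I₂ ω := by
    filter_upwards [h0] with ω hω
    simp only [hI₁, hI₂, hω]
    ring
  rw [Measure.map_congr hae]
  have hvar : ((NNReal.mk ((1 - c) ^ 2) (sq_nonneg _)) * t.toNNReal
      + (NNReal.mk ((-c) ^ 2) (sq_nonneg _)) * (r - t).toNNReal : ℝ≥0) = σ2 := by
    rw [← NNReal.coe_inj]
    push_cast
    rw [Real.coe_toNNReal _ ht.le, Real.coe_toNNReal _ (by linarith : (0:ℝ) ≤ r - t), hσ2, hc]
    field_simp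
    ring
  rw [← hvar]
  exact hsum

def Hfun (r t : ℝ) (σ2 : ℝ≥0) (y : ℝ) : ℝ :=
  Real.sqrt (2 * π * σ2) * (Real.sqrt (2 * π * (r - t)))⁻¹ * Real.sqrt (2 * π * r) *
    Real.exp (y ^ 2 / (2 * t))

lemma Hfun_pos {r t : ℝ} (ht : 0 < t) (htr : t < r) {σ2 : ℝ≥0} (hσ2 : (σ2 : ℝ) = t * (r - t) / r)
    (y : ℝ) : 0 < Hfun r t σ2 y := by
  have hr : (0:ℝ) < r := ht.trans htr
  have h2 : (0:ℝ) < r - t := by linarith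
  have h1 : (0:ℝ) < σ2 := by rw [hσ2]; exact div_pos (mul_pos ht h2) hr
  unfold Hfun
  positivity

lemma kernel_eq {r t : ℝ} (ht : 0 < t) (htr : t < r) {σ2 : ℝ≥0} (hσ2 : (σ2 : ℝ) = t * (r - t) / r)
    (y z : ℝ) :
    gaussDensity (r - t) (z - y) / gaussDensity r z
      = Hfun r t σ2 y * gaussianPDFReal 0 σ2 (y - t / r * z) := by
  have hr : (0:ℝ) < r := ht.trans htr
  have hrt : (0:ℝ) < r - t := by linarith
  have hσ2' : (0:ℝ) < σ2 := by rw [hσ2]; exact div_pos (mul_pos ht hrt) hr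
  unfold gaussDensity Hfun gaussianPDFReal
  rw [sub_zero]
  have h1 : Real.sqrt (2 * π * (r - t)) ≠ 0 := by positivity
  have h2 : Real.sqrt (2 * π * r) ≠ 0 := by positivity
  have h3 : Real.sqrt (2 * π * (σ2:ℝ)) ≠ 0 := by positivity
  rw [div_eq_iff (by positivity : (Real.sqrt (2 * π * r))⁻¹ * Real.exp (-z ^ 2 / (2 * r)) ≠ 0)]
  have hE : Real.exp (y ^ 2 / (2 * t)) * Real.exp (-(y - t / r * z) ^ 2 / (2 * σ2)) *
      Real.exp (-z ^ 2 / (2 * r)) = Real.exp (-(z - y) ^ 2 / (2 * (r - t))) := by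
    rw [← Real.exp_add, ← Real.exp_add]
    congr 1
    rw [hσ2]
    field_simp
    ring
  calc (Real.sqrt (2 * π * (r - t)))⁻¹ * Real.exp (-(z - y) ^ 2 / (2 * (r - t)))
      = (Real.sqrt (2 * π * (r - t)))⁻¹ *
        (Real.exp (y ^ 2 / (2 * t)) * Real.exp (-(y - t / r * z) ^ 2 / (2 * σ2)) *
          Real.exp (-z ^ 2 / (2 * r))) := by rw [hE]
    _ = _ := by
        field_simp

lemma integrable_of_bdd {α : Type*} [MeasurableSpace α] {μ : Measure α} [IsFiniteMeasure μ]
    {f : α → ℝ} (hm : AEStronglyMeasurable f μ) {C : ℝ} (hC : ∀ x, |f x| ≤ C) :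
    Integrable f μ :=
  Integrable.mono' (integrable_const C) hm (Filter.Eventually.of_forall fun x => by
    simpa using hC x)

lemma pdf_shift_integrable (σ2 : ℝ≥0) (a : ℝ) :
    Integrable (fun y : ℝ => gaussianPDFReal 0 σ2 (y - a)) :=
  (integrable_gaussianPDFReal 0 σ2).comp_sub_right a

lemma aux_transfer (P : Measure Ω) [IsProbabilityMeasure P] {X Z : Ω → ℝ}
    (hXm : Measurable X) (hZm : Measurable Z) (σ2 : ℝ≥0) (hσ : σ2 ≠ 0)
    (hjoint : Measure.map (fun ω => (X ω, Z ω)) P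
      = (gaussianReal 0 σ2).prod (Measure.map Z P)) (c : ℝ)
    (h : ℝ → ℝ → ℝ) (hhm : Measurable (Function.uncurry h)) (C : ℝ)
    (hC : ∀ y z, |h y z| ≤ C) :
    ∫ ω, h (X ω + c * Z ω) (Z ω) ∂P
      = ∫ y, ∫ z, gaussianPDFReal 0 σ2 (y - c * z) * h y z ∂(Measure.map Z P) ∂volume := by
  haveI : IsProbabilityMeasure (Measure.map Z P) := Measure.isProbabilityMeasure_map hZm.aemeasurable
  set ν := Measure.map Z P
  set f := gaussianPDFReal 0 σ2 with hf
  have hfm : Measurable f := measurable_gaussianPDFReal 0 σ2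
  have hfnn : ∀ x, 0 ≤ f x := gaussianPDFReal_nonneg 0 σ2
  have hm1 : Measurable fun p : ℝ × ℝ => h (p.1 + c * p.2) p.2 :=
    hhm.comp ((measurable_fst.add (measurable_snd.const_mul c)).prodMk measurable_snd)
  have hm2 : Measurable fun p : ℝ × ℝ => f (p.2 - c * p.1) * h p.2 p.1 :=
    (hfm.comp (measurable_snd.sub (measurable_fst.const_mul c))).mul
      (hhm.comp (measurable_snd.prodMk measurable_fst))
  have step1 : ∫ ω, h (X ω + c * Z ω) (Z ω) ∂P
      = ∫ p : ℝ × ℝ, h (p.1 + c * p.2) p.2 ∂((gaussianReal 0 σ2).prod ν) := by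
    rw [← hjoint, integral_map (hXm.prodMk hZm).aemeasurable hm1.aestronglyMeasurable]
  have hint2 : Integrable (fun p : ℝ × ℝ => h (p.1 + c * p.2) p.2)
      ((gaussianReal 0 σ2).prod ν) :=
    integrable_of_bdd hm1.aestronglyMeasurable (fun p => hC _ _)
  have step2 : ∫ p : ℝ × ℝ, h (p.1 + c * p.2) p.2 ∂((gaussianReal 0 σ2).prod ν)
      = ∫ z, ∫ x, h (x + c * z) z ∂(gaussianReal 0 σ2) ∂ν :=
    integral_prod_symm _ hint2
  have step3 : ∀ z : ℝ, ∫ x, h (x + c * z) z ∂(gaussianReal 0 σ2)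
      = ∫ y, f (y - c * z) * h y z ∂volume := by
    intro z
    have hg : gaussianReal 0 σ2 = volume.withDensity fun x => (Real.toNNReal (f x) : ℝ≥0∞) := by
      rw [gaussianReal_of_var_ne_zero 0 hσ]
      rfl
    rw [hg, integral_withDensity_eq_integral_smul (hfm.real_toNNReal)]
    have : ∀ x : ℝ, Real.toNNReal (f x) • h (x + c * z) z = f x * h (x + c * z) z := by
      intro x
      rw [NNReal.smul_def, smul_eq_mul, Real.coe_toNNReal _ (hfnn x)]
    simp_rw [this]
    calc ∫ x, f x * h (x + c * z) z
        = ∫ y, f (y - c * z) * h (y - c * z + c * z) z ∂volume := by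
          rw [integral_sub_right_eq_self (fun u => f u * h (u + c * z) z) (c * z)]
      _ = ∫ y, f (y - c * z) * h y z ∂volume := by simp_rw [sub_add_cancel]
  have hintk : Integrable (fun p : ℝ × ℝ => f (p.2 - c * p.1) * h p.2 p.1) (ν.prod volume) := by
    rw [integrable_prod_iff hm2.aestronglyMeasurable]
    constructor
    · refine Filter.Eventually.of_forall fun z => ?_
      have hi : Integrable (fun y : ℝ => f (y - c * z)) := pdf_shift_integrable σ2 (c * z)
      have hone : Integrable (fun y => h y z * f (y - c * z)) :=
        hi.bdd_mul ((hhm.comp (measurable_id.prodMk measurable_const)).aestronglyMeasurable)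
          (c := C) (Filter.Eventually.of_forall fun y => by simpa [norm_eq_abs] using hC y z)
      exact hone.congr (Filter.Eventually.of_forall fun y => mul_comm _ _)
    · have hshift : ∀ z : ℝ, ∫ y, f (y - c * z) ∂volume = 1 := by
        intro z
        rw [integral_sub_right_eq_self f (c * z)]
        exact integral_gaussianPDFReal_eq_one 0 hσ
      refine integrable_of_bdd ?_ (C := C) fun z => ?_
      · exact (hm2.norm.stronglyMeasurable.integral_prod_right').aestronglyMeasurable
      · have hnn : 0 ≤ ∫ y, ‖f (y - c * z) * h y z‖ ∂volume :=
          integral_nonneg fun y => norm_nonneg _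
        rw [abs_of_nonneg hnn]
        have hi : Integrable (fun y : ℝ => f (y - c * z)) := pdf_shift_integrable σ2 (c * z)
        have hsec : Integrable (fun y => h y z * f (y - c * z)) :=
          hi.bdd_mul ((hhm.comp (measurable_id.prodMk measurable_const)).aestronglyMeasurable)
            (c := C) (Filter.Eventually.of_forall fun y => by simpa [norm_eq_abs] using hC y z)
        calc ∫ y, ‖f (y - c * z) * h y z‖ ∂volume
            ≤ ∫ y, C * f (y - c * z) ∂volume := by
              refine integral_mono ((hsec.congr (Filter.Eventually.of_forall fun y =>
                mul_comm _ _)).norm) (hi.const_mul C) fun y => ?_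
              rw [norm_mul, norm_eq_abs, norm_eq_abs, abs_of_nonneg (hfnn _), mul_comm]
              exact mul_le_mul_of_nonneg_right (hC y z) (hfnn _)
          _ = C := by rw [integral_const_mul, hshift z, mul_one]
  calc ∫ ω, h (X ω + c * Z ω) (Z ω) ∂P
      = ∫ z, ∫ x, h (x + c * z) z ∂(gaussianReal 0 σ2) ∂ν := by rw [step1, step2]
    _ = ∫ z, ∫ y, f (y - c * z) * h y z ∂volume ∂ν := integral_congr_ae
        (Filter.Eventually.of_forall fun z => step3 z)
    _ = ∫ y, ∫ z, f (y - c * z) * h y z ∂ν ∂volume := integral_integral_swap hintk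

/-- the explicit formula for `E[g(Z) | σ(ζ^{r,Z}_t)]` for the bridge with
deterministic length `r` and random pinning point `Z`. -/
theorem condexp_pin_given_detBridge (P : Measure Ω) [IsProbabilityMeasure P]
    (B : ℝ → Ω → ℝ) (Z : Ω → ℝ)
    (hB : IsBrownianMotion P B)
    (hBmeas : ∀ s, Measurable (B s)) (hZ : Measurable Z)
    (hindep : IndepFun (fun ω s => B s ω) Z P)
    (r : ℝ) (hr : 0 < r) (t : ℝ) (ht : 0 < t)
    (g : ℝ → ℝ) (hg : Measurable g) (hgbdd : ∃ C, ∀ x, |g x| ≤ C) :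
    P[(fun ω => g (Z ω)) |
        MeasurableSpace.comap (detBridge B Z r t) inferInstance]
      =ᵐ[P]
    fun ω =>
      g (detBridge B Z r t ω) * (if r ≤ t then (1 : ℝ) else 0) +
      ((∫ z, g z * (gaussDensity (r - t) (z - detBridge B Z r t ω) / gaussDensity r z)
          ∂(Measure.map Z P)) /
       (∫ z, gaussDensity (r - t) (z - detBridge B Z r t ω) / gaussDensity r z
          ∂(Measure.map Z P))) * (if t < r then (1 : ℝ) else 0) := by
  obtain ⟨C, hgC⟩ := hgbdd
  have hCnn : 0 ≤ C := (abs_nonneg _).trans (hgC 0)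
  by_cases hlt : t < r
  case neg =>
    -- here the bridge at time `t` is just `Z`
    have hle : r ≤ t := not_lt.1 hlt
    have hdet : detBridge B Z r t = Z := funext fun ω => if_neg hlt
    rw [hdet]
    have hm : MeasurableSpace.comap Z inferInstance ≤ _ := hZ.comap_le
    haveI : SigmaFinite (P.trim hm) := by
      haveI := isFiniteMeasure_trim (μ := P) hm
      infer_instance
    have hsm : StronglyMeasurable[MeasurableSpace.comap Z inferInstance] fun ω => g (Z ω) :=
      (hg.comp (measurable_iff_comap_le.mpr le_rfl)).stronglyMeasurable
    have hint : Integrable (fun ω => g (Z ω)) P :=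
      integrable_of_bdd (hg.comp hZ).aestronglyMeasurable fun ω => hgC _
    rw [condExp_of_stronglyMeasurable hm hsm hint]
    refine Filter.Eventually.of_forall fun ω => ?_
    simp [hle, hlt]
  case pos =>
    have hrt : (0:ℝ) < r - t := by linarith
    -- variance of the Gaussian part
    set σ2 : ℝ≥0 := (t * (r - t) / r).toNNReal with hσ2def
    have hσ2 : (σ2 : ℝ) = t * (r - t) / r := Real.coe_toNNReal _ (by positivity)
    have hσ : σ2 ≠ 0 := by
      rw [← NNReal.coe_ne_zero, hσ2]
      positivity
    set f : ℝ → ℝ := gaussianPDFReal 0 σ2 with hfdef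
    have hfm : Measurable f := measurable_gaussianPDFReal 0 σ2
    have hfnn : ∀ x, 0 ≤ f x := gaussianPDFReal_nonneg 0 σ2
    -- the Gaussian part and the bridge
    set X : Ω → ℝ := fun ω => B t ω - t / r * B r ω with hXdef
    have hXm : Measurable X := (hBmeas t).sub ((hBmeas r).const_mul _)
    have hXlaw : Measure.map X P = gaussianReal 0 σ2 := aux_law_X P hB hBmeas ht hlt hσ2
    have hXZ : IndepFun X Z P := by
      have h := hindep.comp (φ := fun w : ℝ → ℝ => w t - t / r * w r) (ψ := id)
        (by fun_prop) measurable_id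
      exact h
    have hjoint : Measure.map (fun ω => (X ω, Z ω)) P
        = (gaussianReal 0 σ2).prod (Measure.map Z P) := by
      rw [← hXlaw]
      exact (indepFun_iff_map_prod_eq_prod_map_map hXm.aemeasurable hZ.aemeasurable).mp hXZ
    set ζ : Ω → ℝ := fun ω => X ω + t / r * Z ω with hζdef
    have hζm : Measurable ζ := hXm.add (hZ.const_mul _)
    have hdet : detBridge B Z r t = ζ := by
      funext ω
      show (if t < r then B t ω - t / r * B r ω + t / r * Z ω else Z ω) = _
      rw [if_pos hlt]
    rw [hdet]
    haveI : IsProbabilityMeasure (Measure.map Z P) := Measure.isProbabilityMeasure_map hZ.aemeasurable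
    set ν : Measure ℝ := Measure.map Z P with hνdef
    -- numerator, denominator and the conditional-expectation candidate
    set Nf : ℝ → ℝ :=
      fun y => ∫ z, g z * (gaussDensity (r - t) (z - y) / gaussDensity r z) ∂ν with hNfdef
    set Df : ℝ → ℝ :=
      fun y => ∫ z, gaussDensity (r - t) (z - y) / gaussDensity r z ∂ν with hDfdef
    set F : ℝ → ℝ := fun y => Nf y / Df y with hFdef
    set N' : ℝ → ℝ := fun y => ∫ z, f (y - t / r * z) * g z ∂ν with hN'def
    set D' : ℝ → ℝ := fun y => ∫ z, f (y - t / r * z) ∂ν with hD'def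
    have hH0 : ∀ y, Hfun r t σ2 y ≠ 0 := fun y => (Hfun_pos ht hlt hσ2 y).ne'
    have hNfeq : ∀ y, Nf y = Hfun r t σ2 y * N' y := by
      intro y
      calc Nf y = ∫ z, Hfun r t σ2 y * (f (y - t / r * z) * g z) ∂ν := by
            refine integral_congr_ae (Filter.Eventually.of_forall fun z => ?_)
            show g z * (gaussDensity (r - t) (z - y) / gaussDensity r z)
                = Hfun r t σ2 y * (f (y - t / r * z) * g z)
            rw [kernel_eq ht hlt hσ2 y z]
            ring
        _ = Hfun r t σ2 y * N' y := integral_const_mul _ _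
    have hDfeq : ∀ y, Df y = Hfun r t σ2 y * D' y := by
      intro y
      calc Df y = ∫ z, Hfun r t σ2 y * f (y - t / r * z) ∂ν := by
            refine integral_congr_ae (Filter.Eventually.of_forall fun z => ?_)
            show gaussDensity (r - t) (z - y) / gaussDensity r z
                = Hfun r t σ2 y * f (y - t / r * z)
            rw [kernel_eq ht hlt hσ2 y z]
        _ = Hfun r t σ2 y * D' y := integral_const_mul _ _
    have hFeq : ∀ y, F y = N' y / D' y := by
      intro y
      rw [hFdef]
      show Nf y / Df y = _
      rw [hNfeq y, hDfeq y, mul_div_mul_left _ _ (hH0 y)]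
    -- integrability and positivity facts
    have hfsecm : ∀ y : ℝ, Measurable fun z : ℝ => f (y - t / r * z) :=
      fun y => hfm.comp (measurable_const.sub (measurable_id.const_mul _))
    have hfint : ∀ y, Integrable (fun z => f (y - t / r * z)) ν := fun y =>
      integrable_of_bdd (hfsecm y).aestronglyMeasurable
        (C := (Real.sqrt (2 * π * σ2))⁻¹) fun z => by
          rw [abs_of_nonneg (hfnn _)]; exact aux_pdf_le σ2 _
    have hgint : Integrable g ν := integrable_of_bdd hg.aestronglyMeasurable hgC
    have hfgint : ∀ y, Integrable (fun z => f (y - t / r * z) * g z) ν := fun y =>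
      hgint.bdd_mul (hfsecm y).aestronglyMeasurable
        (c := (Real.sqrt (2 * π * σ2))⁻¹) (Filter.Eventually.of_forall fun z => by
          rw [norm_eq_abs, abs_of_nonneg (hfnn _)]; exact aux_pdf_le σ2 _)
    have hD'pos : ∀ y, 0 < D' y := by
      intro y
      refine (integral_pos_iff_support_of_nonneg (fun z => hfnn _) (hfint y)).2 ?_
      have hsupp : (Function.support fun z : ℝ => f (y - t / r * z)) = Set.univ :=
        Set.eq_univ_iff_forall.2 fun z => (gaussianPDFReal_pos _ _ _ hσ).ne'
      rw [hsupp]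
      simp
    have hN'bd : ∀ y, |N' y| ≤ C * D' y := by
      intro y
      have habsint : Integrable (fun z => |f (y - t / r * z)| * |g z|) ν := by
        simpa [abs_mul] using (hfgint y).abs
      calc |N' y| ≤ ∫ z, |f (y - t / r * z)| * |g z| ∂ν := by
            simpa [norm_eq_abs, abs_mul] using norm_integral_le_integral_norm
              (fun z => f (y - t / r * z) * g z) (μ := ν)
        _ ≤ ∫ z, C * f (y - t / r * z) ∂ν := by
            refine integral_mono habsint ((hfint y).const_mul C) fun z => ?_
            show |f (y - t / r * z)| * |g z| ≤ C * f (y - t / r * z)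
            rw [abs_of_nonneg (hfnn _), mul_comm]
            exact mul_le_mul_of_nonneg_right (hgC z) (hfnn _)
        _ = C * D' y := integral_const_mul _ _
    have hFbd : ∀ y, |F y| ≤ C := by
      intro y
      rw [hFeq y, abs_div, abs_of_pos (hD'pos y), div_le_iff₀ (hD'pos y)]
      exact hN'bd y
    -- measurability of the candidate
    have hgden : ∀ s : ℝ, Measurable (gaussDensity s) := by
      intro s
      exact measurable_const.mul (((measurable_id.pow_const 2).neg.div_const (2 * s)).exp)
    have hKm : Measurable fun p : ℝ × ℝ => gaussDensity (r - t) (p.2 - p.1) / gaussDensity r p.2 :=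
      ((hgden _).comp (measurable_snd.sub measurable_fst)).div ((hgden _).comp measurable_snd)
    have hNfm : StronglyMeasurable Nf :=
      StronglyMeasurable.integral_prod_right'
        (f := fun p : ℝ × ℝ => g p.2 * (gaussDensity (r - t) (p.2 - p.1) / gaussDensity r p.2))
        ((hg.comp measurable_snd).mul hKm).stronglyMeasurable
    have hDfm : StronglyMeasurable Df :=
      StronglyMeasurable.integral_prod_right'
        (f := fun p : ℝ × ℝ => gaussDensity (r - t) (p.2 - p.1) / gaussDensity r p.2)
        hKm.stronglyMeasurable
    have hFm : Measurable F := hNfm.measurable.div hDfm.measurable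
    -- reduce the stated RHS to `F ∘ ζ`
    have hRHS : (fun ω =>
        g (ζ ω) * (if r ≤ t then (1 : ℝ) else 0) +
        ((∫ z, g z * (gaussDensity (r - t) (z - ζ ω) / gaussDensity r z) ∂ν) /
         (∫ z, gaussDensity (r - t) (z - ζ ω) / gaussDensity r z ∂ν)) *
          (if t < r then (1 : ℝ) else 0)) = fun ω => F (ζ ω) := by
      funext ω
      rw [if_neg (not_le.2 hlt), if_pos hlt]
      simp only [mul_zero, mul_one, zero_add]
      rfl
    rw [hRHS]
    -- apply the characterisation of the conditional expectation
    have hm : MeasurableSpace.comap ζ inferInstance ≤ _ := hζm.comap_le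
    haveI : SigmaFinite (P.trim hm) := by
      haveI := isFiniteMeasure_trim (μ := P) hm
      infer_instance
    have hgZint : Integrable (fun ω => g (Z ω)) P :=
      integrable_of_bdd (hg.comp hZ).aestronglyMeasurable fun ω => hgC _
    have hFζint : Integrable (fun ω => F (ζ ω)) P :=
      integrable_of_bdd ((hFm.comp hζm)).aestronglyMeasurable fun ω => hFbd _
    refine (ae_eq_condExp_of_forall_setIntegral_eq hm hgZint
      (fun s _ _ => hFζint.integrableOn) (fun s hs _ => ?_)
      (StronglyMeasurable.aestronglyMeasurable ((hFm.comp (measurable_iff_comap_le.mpr le_rfl)).stronglyMeasurable))).symm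
    -- the set-integral identity
    obtain ⟨A, hA, rfl⟩ := hs
    have hsA : MeasurableSet (ζ ⁻¹' A) := hζm hA
    set ind : ℝ → ℝ := A.indicator fun _ => (1:ℝ) with hinddef
    have hindm : Measurable ind := measurable_const.indicator hA
    have hindbd : ∀ y, |ind y| ≤ 1 := fun y => by
      rw [hinddef]
      by_cases h : y ∈ A <;> simp [Set.indicator, h]
    -- left side
    have hL : ∫ ω in ζ ⁻¹' A, F (ζ ω) ∂P = ∫ ω, ind (ζ ω) * F (ζ ω) ∂P := by
      rw [← integral_indicator hsA]
      refine integral_congr_ae (Filter.Eventually.of_forall fun ω => ?_)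
      by_cases h : ζ ω ∈ A <;>
        simp [Set.indicator, h, hinddef]
    have hR : ∫ ω in ζ ⁻¹' A, g (Z ω) ∂P = ∫ ω, ind (ζ ω) * g (Z ω) ∂P := by
      rw [← integral_indicator hsA]
      refine integral_congr_ae (Filter.Eventually.of_forall fun ω => ?_)
      by_cases h : ζ ω ∈ A <;>
        simp [Set.indicator, h, hinddef]
    have hT1 : ∫ ω, ind (ζ ω) * g (Z ω) ∂P
        = ∫ y, ∫ z, f (y - t / r * z) * (ind y * g z) ∂ν ∂volume := by
      exact aux_transfer P hXm hZ σ2 hσ hjoint (t / r) (fun y z => ind y * g z)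
        ((hindm.comp measurable_fst).mul (hg.comp measurable_snd)) (1 * C)
        (fun y z => by
          rw [abs_mul]
          exact mul_le_mul (hindbd y) (hgC z) (abs_nonneg _) zero_le_one)
    have hT2 : ∫ ω, ind (ζ ω) * F (ζ ω) ∂P
        = ∫ y, ∫ z, f (y - t / r * z) * (ind y * F y) ∂ν ∂volume := by
      exact aux_transfer P hXm hZ σ2 hσ hjoint (t / r) (fun y z => ind y * F y)
        ((hindm.comp measurable_fst).mul (hFm.comp measurable_fst)) (1 * C)
        (fun y z => by
          rw [abs_mul]
          exact mul_le_mul (hindbd y) (hFbd y) (abs_nonneg _) zero_le_one)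
    rw [hL, hR, hT1, hT2]
    refine integral_congr_ae (Filter.Eventually.of_forall fun y => ?_)
    have e2 : ∫ z, f (y - t / r * z) * (ind y * F y) ∂ν = D' y * (ind y * F y) :=
      integral_mul_const _ _
    have e1 : ∫ z, f (y - t / r * z) * (ind y * g z) ∂ν = ind y * N' y := by
      calc ∫ z, f (y - t / r * z) * (ind y * g z) ∂ν
          = ∫ z, ind y * (f (y - t / r * z) * g z) ∂ν := by
            refine integral_congr_ae (Filter.Eventually.of_forall fun z => ?_)
            ring
        _ = ind y * N' y := integral_const_mul _ _
    show (∫ z, f (y - t / r * z) * (ind y * F y) ∂ν)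
        = ∫ z, f (y - t / r * z) * (ind y * g z) ∂ν
    rw [e1, e2, hFeq y]
    have hne := (hD'pos y).ne'
    field_simp


end LevyBridge
end
end

section
/- The explicit process ζ satisfies the defining property of a bridge with random length τ and random pinning point Z: for every n ∈ ℕ, all times 0 < t_1 < … < t_n, and every bounded measurable g : ℝⁿ → ℝ, one has E[ g(ζ_{t_1}, …, ζ_{t_n}) | σ(τ, Z) ] = G(τ, Z) P-almost surely, where G(r, z) := E[ g(Y^{r,z}_{t_1}, …, Y^{r,z}_{t_n}) ] and Y^{r,z}_s := (B_s − (s/r)B_r + (s/r)z)·1_{{s<r}} + z·1_{{s≥r}} is the Brownian bridge of length r from 0 to z extended by the constant z after time r. -/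
open MeasureTheory ProbabilityTheory Real Set

noncomputable section

namespace LevyBridge

variable {Ω : Type*} [MeasurableSpace Ω]

/-- The Brownian bridge of length `r` from `0` to `z`, extended by the constant value
`z` after time `r`. -/
def detBridgePt (B : ℝ → Ω → ℝ) (r z s : ℝ) (ω : Ω) : ℝ :=
  if s < r then B s ω - (s / r) * B r ω + (s / r) * z else z

/-- Jointly measurable "evaluation at a point" via dyadic approximation from above:
for continuous `f`, `evPt (r, f) = f r`. -/
def evPt (p : ℝ × (ℝ → ℝ)) : ℝ :=
  (Filter.limsup
    (fun k : ℕ => ((p.2 (((⌈p.1 * 2 ^ k⌉ : ℤ) : ℝ) / 2 ^ k)) : EReal)) Filter.atTop).toReal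

lemma measurable_evk (k : ℕ) :
    Measurable fun p : ℝ × (ℝ → ℝ) => p.2 (((⌈p.1 * 2 ^ k⌉ : ℤ) : ℝ) / 2 ^ k) := by
  intro S hS
  have heq : (fun p : ℝ × (ℝ → ℝ) => p.2 (((⌈p.1 * 2 ^ k⌉ : ℤ) : ℝ) / 2 ^ k)) ⁻¹' S =
      ⋃ m : ℤ, {p : ℝ × (ℝ → ℝ) | ⌈p.1 * 2 ^ k⌉ = m} ∩ {p | p.2 ((m : ℝ) / 2 ^ k) ∈ S} := by
    ext p
    simp only [Set.mem_preimage, Set.mem_iUnion, Set.mem_inter_iff, Set.mem_setOf_eq]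
    constructor
    · intro h; exact ⟨⌈p.1 * 2 ^ k⌉, rfl, h⟩
    · rintro ⟨m, hm, h⟩; rw [hm]; exact h
  rw [heq]
  refine MeasurableSet.iUnion fun m => MeasurableSet.inter ?_ ?_
  · exact (Int.measurable_ceil.comp (measurable_fst.mul_const _)) (measurableSet_singleton m)
  · exact ((measurable_pi_apply _).comp measurable_snd) hS

lemma measurable_evPt : Measurable evPt :=
  measurable_ereal_toReal.comp (Measurable.limsup fun k => (measurable_evk k).coe_real_ereal)

lemma evPt_eq (f : ℝ → ℝ) (hf : Continuous f) (r : ℝ) : evPt (r, f) = f r := by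
  have hpow : ∀ k : ℕ, (0 : ℝ) < 2 ^ k := fun k => by positivity
  have htend : Filter.Tendsto (fun k : ℕ => ((⌈r * 2 ^ k⌉ : ℤ) : ℝ) / 2 ^ k)
      Filter.atTop (nhds r) := by
    have h1 : ∀ k : ℕ, r ≤ ((⌈r * 2 ^ k⌉ : ℤ) : ℝ) / 2 ^ k := fun k => by
      rw [le_div_iff₀ (hpow k)]; exact Int.le_ceil _
    have h2 : ∀ k : ℕ, ((⌈r * 2 ^ k⌉ : ℤ) : ℝ) / 2 ^ k ≤ r + ((2 : ℝ) ^ k)⁻¹ := fun k => by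
      rw [div_le_iff₀ (hpow k)]
      calc ((⌈r * 2 ^ k⌉ : ℤ) : ℝ) ≤ r * 2 ^ k + 1 := (Int.ceil_lt_add_one _).le
        _ = (r + ((2 : ℝ) ^ k)⁻¹) * 2 ^ k := by field_simp
    have hlim : Filter.Tendsto (fun k : ℕ => r + ((2 : ℝ) ^ k)⁻¹) Filter.atTop (nhds r) := by
      have h0 : Filter.Tendsto (fun k : ℕ => ((2 : ℝ)⁻¹) ^ k) Filter.atTop (nhds 0) :=
        tendsto_pow_atTop_nhds_zero_of_lt_one (by norm_num) (by norm_num)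
      simpa [inv_pow] using h0.const_add r
    exact tendsto_of_tendsto_of_tendsto_of_le_of_le tendsto_const_nhds hlim h1 h2
  have hT : Filter.Tendsto
      (fun k : ℕ => ((f (((⌈r * 2 ^ k⌉ : ℤ) : ℝ) / 2 ^ k)) : EReal)) Filter.atTop
      (nhds ((f r : ℝ) : EReal)) :=
    (continuous_coe_real_ereal.tendsto _).comp ((hf.tendsto r).comp htend)
  unfold evPt
  rw [hT.limsup_eq]
  simp

/-- The freezing lemma. -/
lemma freezing {Ω E F : Type*} [MeasurableSpace Ω] [MeasurableSpace E] [MeasurableSpace F]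
    (P : Measure Ω) [IsProbabilityMeasure P]
    {X : Ω → E} {W : Ω → F} (hX : Measurable X) (hW : Measurable W)
    (hindep : IndepFun X W P)
    (Φ : F × E → ℝ) (hΦ : Measurable Φ) (C : ℝ) (hC : ∀ p, |Φ p| ≤ C) :
    P[(fun ω => Φ (W ω, X ω)) | MeasurableSpace.comap W inferInstance]
      =ᵐ[P] fun ω => ∫ ω', Φ (W ω, X ω') ∂P := by
  have hm : MeasurableSpace.comap W inferInstance ≤ ‹MeasurableSpace Ω› := hW.comap_le
  haveI : SigmaFinite (P.trim hm) := inferInstance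
  set ν := P.map X with hν
  haveI : IsProbabilityMeasure ν := Measure.isProbabilityMeasure_map hX.aemeasurable
  set μW := P.map W with hμW
  haveI : IsProbabilityMeasure μW := Measure.isProbabilityMeasure_map hW.aemeasurable
  set h : F → ℝ := fun w => ∫ x, Φ (w, x) ∂ν with hh
  have h_sm : StronglyMeasurable h := hΦ.stronglyMeasurable.integral_prod_right'
  have h_bdd : ∀ w, |h w| ≤ C := by
    intro w
    have := norm_integral_le_of_norm_le_const (μ := ν) (f := fun x => Φ (w, x)) (C := C)
      (Filter.Eventually.of_forall fun x => by simpa [Real.norm_eq_abs] using hC (w, x))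
    simpa [Real.norm_eq_abs, measure_univ] using this
  have hgW : ∀ ω, (∫ ω', Φ (W ω, X ω') ∂P) = h (W ω) := by
    intro ω
    rw [hh]
    exact (integral_map hX.aemeasurable
      ((hΦ.comp (measurable_const.prodMk measurable_id)).aestronglyMeasurable)).symm
  have hg_eqfun : (fun ω => ∫ ω', Φ (W ω, X ω') ∂P) = fun ω => h (W ω) := funext hgW
  have hf_int : Integrable (fun ω => Φ (W ω, X ω)) P :=
    ⟨(hΦ.comp (hW.prodMk hX)).aestronglyMeasurable,
      HasFiniteIntegral.of_bounded (C := C)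
        (Filter.Eventually.of_forall fun ω => by simpa [Real.norm_eq_abs] using hC _)⟩
  have hg_int : Integrable (fun ω => h (W ω)) P :=
    ⟨(h_sm.measurable.comp hW).aestronglyMeasurable,
      HasFiniteIntegral.of_bounded (C := C)
        (Filter.Eventually.of_forall fun ω => by simpa [Real.norm_eq_abs] using h_bdd _)⟩
  refine (ae_eq_condExp_of_forall_setIntegral_eq hm hf_int ?_ ?_ ?_).symm
  · intro s _ _
    rw [hg_eqfun]; exact hg_int.integrableOn
  · rintro s ⟨A, hA, rfl⟩ _
    rw [hg_eqfun]
    have hmap : P.map (fun ω => (W ω, X ω)) = μW.prod ν :=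
      (indepFun_iff_map_prod_eq_prod_map_map hW.aemeasurable hX.aemeasurable).mp hindep.symm
    set ψ : F × E → ℝ := fun p => Set.indicator A (fun _ => (1 : ℝ)) p.1 * Φ p with hψ
    have hψm : Measurable ψ := ((measurable_const.indicator hA).comp measurable_fst).mul hΦ
    have hψb : ∀ p, |ψ p| ≤ C := by
      intro p
      have hC0 : 0 ≤ C := le_trans (abs_nonneg _) (hC p)
      by_cases hp : p.1 ∈ A
      · simpa [hψ, Set.indicator_of_mem hp] using hC p
      · simp [hψ, Set.indicator_of_notMem hp, hC0]
    have hψ_int : Integrable ψ (μW.prod ν) :=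
      ⟨hψm.aestronglyMeasurable,
        HasFiniteIntegral.of_bounded (C := C)
          (Filter.Eventually.of_forall fun p => by simpa [Real.norm_eq_abs] using hψb p)⟩
    calc ∫ ω in W ⁻¹' A, h (W ω) ∂P
        = ∫ ω, Set.indicator (W ⁻¹' A) (fun ω => h (W ω)) ω ∂P := (integral_indicator (hW hA)).symm
      _ = ∫ ω, Set.indicator A (fun _ => (1 : ℝ)) (W ω) * h (W ω) ∂P := by
          refine integral_congr_ae (Filter.Eventually.of_forall fun ω => ?_)
          by_cases hω : W ω ∈ A <;> simp [Set.indicator, hω]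
      _ = ∫ w, Set.indicator A (fun _ => (1 : ℝ)) w * h w ∂μW := by
          rw [hμW, integral_map hW.aemeasurable (f := fun w => Set.indicator A (fun _ => (1 : ℝ)) w * h w)
            (((measurable_const.indicator hA).mul h_sm.measurable).aestronglyMeasurable)]
      _ = ∫ w, ∫ x, ψ (w, x) ∂ν ∂μW := by
          refine integral_congr_ae (Filter.Eventually.of_forall fun w => ?_)
          rw [hψ]; simp only
          rw [integral_const_mul]
      _ = ∫ p, ψ p ∂(μW.prod ν) := (integral_prod _ hψ_int).symm
      _ = ∫ ω, ψ (W ω, X ω) ∂P := by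
          rw [← hmap, integral_map ((hW.prodMk hX).aemeasurable) hψm.aestronglyMeasurable]
      _ = ∫ ω, Set.indicator (W ⁻¹' A) (fun ω => Φ (W ω, X ω)) ω ∂P := by
          refine integral_congr_ae (Filter.Eventually.of_forall fun ω => ?_)
          by_cases hω : W ω ∈ A <;> simp [hψ, Set.indicator, hω]
      _ = ∫ ω in W ⁻¹' A, Φ (W ω, X ω) ∂P := integral_indicator (hW hA)
  · rw [hg_eqfun]
    have hWm : Measurable[MeasurableSpace.comap W inferInstance] W :=
      measurable_iff_comap_le.mpr le_rfl
    exact (h_sm.comp_measurable hWm).aestronglyMeasurable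


/-- the explicit process `ζ` satisfies the defining property of a bridge
with random length `τ` and random pinning point `Z`: conditionally on `(τ, Z) = (r, z)`
its finite-dimensional distributions are those of the Brownian bridge of length `r`
from `0` to `z`. -/
theorem bridge_conditional_law (P : Measure Ω) [IsProbabilityMeasure P]
    (B : ℝ → Ω → ℝ) (τ Z : Ω → ℝ)
    (hB : IsBrownianMotion P B)
    (hBmeas : ∀ s, Measurable (B s)) (hτ : Measurable τ) (hZ : Measurable Z)
    (hτpos : ∀ ω, 0 < τ ω)
    (hindep : MutuallyIndep P B τ Z)
    (n : ℕ) (t : Fin (n + 1) → ℝ) (ht0 : 0 < t 0) (htmono : StrictMono t)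
    (g : (Fin (n + 1) → ℝ) → ℝ) (hg : Measurable g) (hgbdd : ∃ C, ∀ x, |g x| ≤ C) :
    P[(fun ω => g (fun i => bridge B τ Z (t i) ω)) |
        MeasurableSpace.comap (fun ω => (τ ω, Z ω)) inferInstance]
      =ᵐ[P]
    fun ω => ∫ ω', g (fun i => detBridgePt B (τ ω) (Z ω) (t i) ω') ∂P := by
  classical
  obtain ⟨C, hC⟩ := hgbdd
  set X : Ω → (ℝ → ℝ) := fun ω s => B s ω with hXdef
  have hX : Measurable X := measurable_pi_lambda _ hBmeas
  have hWm : Measurable fun ω => (τ ω, Z ω) := hτ.prodMk hZ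
  set Φ : (ℝ × ℝ) × (ℝ → ℝ) → ℝ := fun p =>
    g (fun i => if t i < p.1.1 then
        p.2 (t i) - (t i / p.1.1) * evPt (p.1.1, p.2) + (t i / p.1.1) * p.1.2
      else p.1.2) with hΦdef
  have hcoord : ∀ i, Measurable fun p : (ℝ × ℝ) × (ℝ → ℝ) =>
      if t i < p.1.1 then
        p.2 (t i) - (t i / p.1.1) * evPt (p.1.1, p.2) + (t i / p.1.1) * p.1.2
      else p.1.2 := by
    intro i
    refine Measurable.ite (measurableSet_lt measurable_const measurable_fst.fst) ?_
      measurable_fst.snd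
    have hev : Measurable fun p : (ℝ × ℝ) × (ℝ → ℝ) => evPt (p.1.1, p.2) :=
      measurable_evPt.comp (measurable_fst.fst.prodMk measurable_snd)
    have hdiv : Measurable fun p : (ℝ × ℝ) × (ℝ → ℝ) => t i / p.1.1 :=
      measurable_const.div measurable_fst.fst
    exact (((measurable_pi_apply (t i)).comp measurable_snd).sub (hdiv.mul hev)).add
      (hdiv.mul measurable_fst.snd)
  have hΦ : Measurable Φ := hg.comp (measurable_pi_lambda _ hcoord)
  have hΦb : ∀ p, |Φ p| ≤ C := fun p => hC _
  have key := freezing P hX hWm hindep.1 Φ hΦ C hΦb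
  have hcont := hB.2.1
  have h1 : (fun ω => g (fun i => bridge B τ Z (t i) ω))
      =ᵐ[P] fun ω => Φ ((τ ω, Z ω), X ω) := by
    filter_upwards [hcont] with ω hω
    have hev : evPt (τ ω, X ω) = B (τ ω) ω := evPt_eq _ hω _
    rw [hΦdef]
    congr 1
    funext i
    by_cases hlt : t i < τ ω
    · simp only [if_pos hlt, hev, bridge, min_eq_left hlt.le, hXdef]; rw [← hev]
    · have hge : τ ω ≤ t i := not_lt.mp hlt
      simp [bridge, if_neg hlt, min_eq_right hge, div_self (hτpos ω).ne']
  have h2 : ∀ ω, (∫ ω', g (fun i => detBridgePt B (τ ω) (Z ω) (t i) ω') ∂P)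
      = ∫ ω', Φ ((τ ω, Z ω), X ω') ∂P := by
    intro ω
    refine integral_congr_ae ?_
    filter_upwards [hcont] with ω' hω'
    have hev : evPt (τ ω, X ω') = B (τ ω) ω' := evPt_eq _ hω' _
    rw [hΦdef]
    congr 1
    funext i
    by_cases hlt : t i < τ ω <;>
      simp [detBridgePt, hlt, hev, hXdef] <;> exact Or.inl hev.symm
  refine (condExp_congr_ae h1).trans (key.trans ?_)
  exact Filter.EventuallyEq.of_eq (funext fun ω => (h2 ω).symm)


end LevyBridge
end
end
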